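/- arXiv:1702.08534 — 2 statements merged into one kernel-verified Lean document; each statement's English description precedes it below -/
import Mathlib

section
/- Let M ≥ 2 be an integer and d ∈ ℤ. Let θ̃₀ : ℝ → ℝ be the 2π-periodic function such that for every ω ∈ [0, 2π), θ̃₀(ω) = (d + 1/2)(M − 1)ω − ⌊Mω/(2π)⌋·π, and for ω ≥ 0 let β(ω) := ∑_{i=1}^{∞} θ̃₀(ω/M^{i}) (this series converges). Let α̃ : ℝ → ℝ be the 2π/M-periodic function such that for every ω ∈ [0, 2π/M), α̃(ω) = π/2 − (d + 1/2)Mω. Then for every ω > 0, α̃(ω/M) + β(ω) ≡ π/2 (mod 2π). -/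
open Real

/-!
Unwinding the periodicity, θ̃₀(x) = (d + 1/2)(M - 1)x + π(⌊x/2π⌋ - ⌊Mx/2π⌋) modulo 2π for every
real x. At x = ω/M^(i+1) the linear parts form a geometric series with sum (d + 1/2)ω, while the
floor parts telescope, because ⌊ω/(2πM^j)⌋ vanishes for large j, leaving -π⌊ω/2π⌋. Likewise
α̃(ω/M) = π/2 - (d + 1/2)ω + (2d + 1)π⌊ω/2π⌋, and in the sum everything but π/2 cancels modulo 2π.
-/

theorem Function.Periodic.eq_of_eqOn_Ico {K β : Type*} [Field K] [LinearOrder K] [IsOrderedRing K]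
    [FloorRing K] {f g : K → β} {T : K} (hf : Function.Periodic f T) (hT : 0 < T)
    (hfg : ∀ x, 0 ≤ x → x < T → f x = g x) (x : K) : f x = g (x - ⌊x / T⌋ * T) :=
  (hf.sub_int_mul_eq _).symm.trans
    (hfg _ (Int.sub_floor_div_mul_nonneg x hT) (Int.sub_floor_div_mul_lt x hT))

theorem hasSum_div_pow_succ {r : ℝ} (hr : 1 < r) (x : ℝ) :
    HasSum (fun i : ℕ => x / r ^ (i + 1)) (x / (r - 1)) := by
  have hr0 : 0 < r := zero_lt_one.trans hr
  have hr1 : r - 1 ≠ 0 := sub_ne_zero.2 hr.ne'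
  have h := (hasSum_geometric_of_lt_one (inv_nonneg.2 hr0.le) (inv_lt_one_of_one_lt₀ hr)).mul_left
    (x / r)
  have hsum : x / r * (1 - r⁻¹)⁻¹ = x / (r - 1) := by field_simp
  have hterm : (fun i : ℕ => x / r * r⁻¹ ^ i) = fun i => x / r ^ (i + 1) := by
    ext i; rw [inv_pow, pow_succ]; ring
  rwa [hsum, hterm] at h

theorem exists_floor_div_pow_eq_zero {K : Type*} [Field K] [LinearOrder K] [IsStrictOrderedRing K]
    [FloorRing K] [Archimedean K] {r y : K} (hr : 1 < r) (hy : 0 ≤ y) :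
    ∃ I : ℕ, ∀ j, I ≤ j → ⌊y / r ^ j⌋ = 0 := by
  obtain ⟨I, hI⟩ := pow_unbounded_of_one_lt y hr
  refine ⟨I, fun j hj => Int.floor_eq_zero_iff.2 ⟨by positivity, ?_⟩⟩
  rw [div_lt_one (by positivity)]
  exact hI.trans_le (pow_le_pow_right₀ hr.le hj)

theorem hasSum_sub_of_eq_zero {G : Type*} [AddCommGroup G] [TopologicalSpace G] {N : ℕ → G}
    {I : ℕ} (hN : ∀ j, I ≤ j → N j = 0) : HasSum (fun i => N (i + 1) - N i) (-N 0) := by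
  have h : HasSum (fun i => N (i + 1) - N i) (∑ i ∈ Finset.range I, (N (i + 1) - N i)) :=
    hasSum_sum_of_ne_finset_zero fun j hj => by
      rw [Finset.mem_range, not_lt] at hj
      simp [hN j hj, hN (j + 1) (by omega)]
  rwa [Finset.sum_range_sub, hN I le_rfl, zero_sub] at h

theorem hasSum_intCast_of_eq_zero {N : ℕ → ℤ} {I : ℕ} (hN : ∀ j, I ≤ j → N j = 0) :
    ∃ K : ℤ, HasSum (fun i => (N i : ℝ)) K :=
  ⟨∑ i ∈ Finset.range I, N i, by
    push_cast
    exact hasSum_sum_of_ne_finset_zero fun j hj => by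
      rw [hN j (not_lt.1 (Finset.mem_range.not.1 hj)), Int.cast_zero]⟩

theorem theta_eq_linear_add_floor (M : ℕ) (d : ℤ) (θ₀ : ℝ → ℝ)
    (hper : ∀ ω : ℝ, θ₀ (ω + 2 * π) = θ₀ ω)
    (hval : ∀ ω : ℝ, 0 ≤ ω → ω < 2 * π →
      θ₀ ω = ((d : ℝ) + 1 / 2) * ((M : ℝ) - 1) * ω - (⌊(M : ℝ) * ω / (2 * π)⌋ : ℝ) * π)
    (x : ℝ) :
    θ₀ x = ((d : ℝ) + 1 / 2) * ((M : ℝ) - 1) * x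
      + π * (⌊x / (2 * π)⌋ - ⌊(M : ℝ) * x / (2 * π)⌋)
      - 2 * π * d * ((M : ℝ) - 1) * ⌊x / (2 * π)⌋ := by
  have hfloor : ⌊(M : ℝ) * (x - ⌊x / (2 * π)⌋ * (2 * π)) / (2 * π)⌋
      = ⌊(M : ℝ) * x / (2 * π)⌋ - M * ⌊x / (2 * π)⌋ := by
    rw [← Int.floor_sub_intCast]
    congr 1
    push_cast
    field_simp
  rw [Function.Periodic.eq_of_eqOn_Ico hper (by positivity) hval x, hfloor]
  push_cast
  ring

theorem hasSum_theta_div_pow (M : ℕ) (hM : 2 ≤ M) (d : ℤ) (θ₀ : ℝ → ℝ)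
    (hper : ∀ ω : ℝ, θ₀ (ω + 2 * π) = θ₀ ω)
    (hval : ∀ ω : ℝ, 0 ≤ ω → ω < 2 * π →
      θ₀ ω = ((d : ℝ) + 1 / 2) * ((M : ℝ) - 1) * ω - (⌊(M : ℝ) * ω / (2 * π)⌋ : ℝ) * π)
    {ω : ℝ} (hω : 0 ≤ ω) :
    ∃ K : ℤ, HasSum (fun i : ℕ => θ₀ (ω / (M : ℝ) ^ (i + 1)))
      (((d : ℝ) + 1 / 2) * ω - π * ⌊ω / (2 * π)⌋ - 2 * π * d * ((M : ℝ) - 1) * K) := by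
  have hM1 : (1 : ℝ) < M := Nat.one_lt_cast.2 hM
  let N (j : ℕ) : ℤ := ⌊ω / (2 * π) / (M : ℝ) ^ j⌋
  obtain ⟨I, hI⟩ : ∃ I : ℕ, ∀ j, I ≤ j → N j = 0 :=
    exists_floor_div_pow_eq_zero hM1 (by positivity)
  obtain ⟨K, hK⟩ := hasSum_intCast_of_eq_zero (N := fun j => N (j + 1)) (I := I)
    fun j hj => hI _ (by omega)
  have hterm (i : ℕ) : θ₀ (ω / (M : ℝ) ^ (i + 1)) = ((d : ℝ) + 1 / 2) * ((M : ℝ) - 1)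
      * (ω / (M : ℝ) ^ (i + 1)) + π * ((N (i + 1) : ℝ) - N i)
      - 2 * π * d * ((M : ℝ) - 1) * N (i + 1) := by
    have h1 : ω / (M : ℝ) ^ (i + 1) / (2 * π) = ω / (2 * π) / (M : ℝ) ^ (i + 1) :=
      div_right_comm _ _ _
    have h2 : (M : ℝ) * (ω / (M : ℝ) ^ (i + 1)) / (2 * π) = ω / (2 * π) / (M : ℝ) ^ i := by
      rw [pow_succ]; field_simp
    rw [theta_eq_linear_add_floor M d θ₀ hper hval, h1, h2]
  have hsum := (((hasSum_div_pow_succ hM1 ω).mul_left (((d : ℝ) + 1 / 2) * ((M : ℝ) - 1))).add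
    ((hasSum_sub_of_eq_zero (N := fun j => (N j : ℝ)) (I := I)
      fun j hj => by simp [hI j hj]).mul_left π)).sub
    (hK.mul_left (2 * π * d * ((M : ℝ) - 1)))
  have hlim : ((d : ℝ) + 1 / 2) * ((M : ℝ) - 1) * (ω / ((M : ℝ) - 1)) + π * -(N 0 : ℝ)
      - 2 * π * d * ((M : ℝ) - 1) * K
      = ((d : ℝ) + 1 / 2) * ω - π * ⌊ω / (2 * π)⌋ - 2 * π * d * ((M : ℝ) - 1) * K := by
    simp only [N, pow_zero, div_one]
    field_simp [(sub_pos.2 hM1).ne']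
    ring
  refine ⟨K, ?_⟩
  rw [funext hterm, ← hlim]
  exact hsum

theorem alpha_div_eq (M : ℕ) (hM : 2 ≤ M) (d : ℤ) (α : ℝ → ℝ)
    (hαper : ∀ ω : ℝ, α (ω + 2 * π / M) = α ω)
    (hαval : ∀ ω : ℝ, 0 ≤ ω → ω < 2 * π / M →
      α ω = π / 2 - ((d : ℝ) + 1 / 2) * M * ω) (ω : ℝ) :
    α (ω / M) = π / 2 - ((d : ℝ) + 1 / 2) * ω + 2 * π * ((d : ℝ) + 1 / 2) * ⌊ω / (2 * π)⌋ := by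
  have hM0 : (0 : ℝ) < M := Nat.cast_pos.2 (by omega)
  have h : ω / M / (2 * π / M) = ω / (2 * π) := by field_simp
  rw [Function.Periodic.eq_of_eqOn_Ico hαper (by positivity) hαval, h]
  field_simp
  ring

/-- Verification (Appendix A) that the explicit piecewise-linear phase functions
of Proposition 2 satisfy the M-band Hilbert phase equation for positive
frequencies. -/
theorem stmt_5 (M : ℕ) (hM : 2 ≤ M) (d : ℤ) (θ₀ α : ℝ → ℝ)
    (hper : ∀ ω : ℝ, θ₀ (ω + 2 * π) = θ₀ ω)
    (hval : ∀ ω : ℝ, 0 ≤ ω → ω < 2 * π →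
      θ₀ ω = ((d : ℝ) + 1 / 2) * ((M : ℝ) - 1) * ω - (⌊(M : ℝ) * ω / (2 * π)⌋ : ℝ) * π)
    (hαper : ∀ ω : ℝ, α (ω + 2 * π / M) = α ω)
    (hαval : ∀ ω : ℝ, 0 ≤ ω → ω < 2 * π / M →
      α ω = π / 2 - ((d : ℝ) + 1 / 2) * M * ω) :
    (∀ ω : ℝ, 0 ≤ ω → Summable (fun i : ℕ => θ₀ (ω / (M : ℝ) ^ (i + 1)))) ∧
    (∀ ω : ℝ, 0 < ω →
      ∃ n : ℤ, α (ω / M) + (∑' i : ℕ, θ₀ (ω / (M : ℝ) ^ (i + 1)))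
        = π / 2 + 2 * π * n) := by
  refine ⟨fun ω hω => ?_, fun ω hω => ?_⟩
  · obtain ⟨K, hK⟩ := hasSum_theta_div_pow M hM d θ₀ hper hval hω
    exact hK.summable
  · obtain ⟨K, hK⟩ := hasSum_theta_div_pow M hM d θ₀ hper hval hω.le
    refine ⟨d * ⌊ω / (2 * π)⌋ - d * (M - 1) * K, ?_⟩
    rw [alpha_div_eq M hM d α hαper hαval, hK.tsum_eq]
    push_cast
    ring
end

section
/- Let d ∈ ℤ, k_m ∈ ℤ, and ε ∈ {−1, +1}. Let h, g : ℤ → ℝ be absolutely summable sequences with Fourier transforms H(ω) = ∑_{k∈ℤ} h[k] e^{-ikω} and G(ω) = ∑_{k∈ℤ} g[k] e^{-ikω}. Let θ : ℝ → ℝ satisfy: for every ω ∈ ℝ there exists n ∈ ℤ with 2θ(ω) = π − (2d+1)ω + 2πn, and suppose G(ω) = e^{-iθ(ω)} H(ω) for every ω ∈ ℝ. If h[2k_m − k] = ε·h[k] for every k ∈ ℤ, then g[2k_m − 2d − 1 − k] = −ε·g[k] for every k ∈ ℤ. -/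
/-! Reflecting a real sequence `c` about `a` acts on its Fourier transform as
`C(ω) ↦ e^{-iaω} conj C(ω)`, so `c (a - k) = ε c k` is equivalent to `conj C = ε e^{iaω} C`
(the converse direction by uniqueness of Fourier coefficients of absolutely summable sequences).
Since `e^{2iθ(ω)} = -e^{-i(2d+1)ω}`, the relation `G = e^{-iθ} H` turns
`conj H = ε e^{2ik_mω} H` into `conj G = -ε e^{i(2k_m-2d-1)ω} G`. -/

open Real Complex ComplexConjugate

noncomputable def dtft (c : ℤ → ℝ) (ω : ℝ) : ℂ :=
  ∑' k : ℤ, (c k : ℂ) * cexp (-(((k : ℝ) * ω : ℝ) : ℂ) * I)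

lemma norm_dtft_term (c : ℤ → ℝ) (k : ℤ) (ω : ℝ) :
    ‖(c k : ℂ) * cexp (-(((k : ℝ) * ω : ℝ) : ℂ) * I)‖ = |c k| := by
  rw [norm_mul, ← ofReal_neg, norm_exp_ofReal_mul_I, mul_one, norm_real, Real.norm_eq_abs]

lemma summable_dtft_term {c : ℤ → ℝ} (hc : Summable fun k => |c k|) (ω : ℝ) :
    Summable fun k : ℤ => (c k : ℂ) * cexp (-(((k : ℝ) * ω : ℝ) : ℂ) * I) :=
  .of_norm <| by simpa only [norm_dtft_term] using hc

lemma dtft_const_mul (r : ℝ) (c : ℤ → ℝ) (ω : ℝ) :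
    dtft (fun k => r * c k) ω = r * dtft c ω := by
  simp only [dtft, ofReal_mul, mul_assoc, tsum_mul_left]

lemma dtft_comp_sub_left (c : ℤ → ℝ) (a : ℤ) (ω : ℝ) :
    dtft (fun k => c (a - k)) ω = cexp (-((a * ω : ℝ) : ℂ) * I) * conj (dtft c ω) := by
  rw [dtft, ← (Equiv.subLeft a).tsum_eq, dtft, conj_tsum, ← tsum_mul_left]
  refine tsum_congr fun k => ?_
  rw [Equiv.subLeft_apply, sub_sub_cancel, map_mul, conj_ofReal, ← Complex.exp_conj,
    mul_left_comm, ← Complex.exp_add]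
  congr 2
  simp only [map_mul, map_neg, conj_ofReal, conj_I]
  push_cast
  ring

lemma integral_exp_int_mul_I (n : ℤ) :
    ∫ ω in (0 : ℝ)..2 * π, cexp ((n * ω : ℝ) * I) =
      if n = 0 then (2 * π : ℂ) else 0 := by
  split_ifs with hn
  · simp [hn]
  · have hnI : (n : ℂ) * I ≠ 0 := by simp [hn, I_ne_zero]
    simp_rw [ofReal_mul, ofReal_intCast, mul_right_comm _ _ I]
    rw [integral_exp_mul_complex hnI, ofReal_zero, mul_zero, Complex.exp_zero]
    have hperiod : cexp (n * I * (2 * π : ℝ)) = 1 := by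
      rw [← exp_int_mul_two_pi_mul_I n]; push_cast; ring_nf
    rw [hperiod, sub_self, zero_div]

lemma integral_exp_mul_dtft {c : ℤ → ℝ} (hc : Summable fun k => |c k|) (m : ℤ) :
    ∫ ω in (0 : ℝ)..2 * π, cexp ((m * ω : ℝ) * I) * dtft c ω = 2 * π * c m := by
  have hterm : ∀ k : ℤ, ∫ ω in (0 : ℝ)..2 * π,
      cexp ((m * ω : ℝ) * I) * ((c k : ℂ) * cexp (-(((k : ℝ) * ω : ℝ) : ℂ) * I)) =
        if k = m then (2 * π : ℂ) * c m else 0 := by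
    intro k
    have hintegrand : ∀ ω : ℝ,
        cexp ((m * ω : ℝ) * I) * ((c k : ℂ) * cexp (-(((k : ℝ) * ω : ℝ) : ℂ) * I)) =
          c k * cexp ((((m - k : ℤ) : ℝ) * ω : ℝ) * I) := by
      intro ω
      rw [mul_left_comm, ← Complex.exp_add]
      push_cast
      ring_nf
    simp_rw [hintegrand, intervalIntegral.integral_const_mul, integral_exp_int_mul_I, sub_eq_zero,
      eq_comm (a := m)]
    split_ifs with hk
    · rw [hk, mul_comm]
    · rw [mul_zero]
  have hsum := intervalIntegral.hasSum_integral_of_dominated_convergence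
    (μ := MeasureTheory.volume) (a := 0) (b := 2 * π)
    (F := fun k ω =>
      cexp ((m * ω : ℝ) * I) * ((c k : ℂ) * cexp (-(((k : ℝ) * ω : ℝ) : ℂ) * I)))
    (f := fun ω => cexp ((m * ω : ℝ) * I) * dtft c ω) (fun k _ => |c k|)
    (fun k => by fun_prop)
    (fun k => .of_forall fun ω _ => by
      rw [norm_mul, norm_exp_ofReal_mul_I, one_mul, norm_dtft_term])
    (.of_forall fun _ _ => hc) intervalIntegrable_const
    (.of_forall fun ω _ => (summable_dtft_term hc ω).hasSum.mul_left _)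
  simp_rw [hterm] at hsum
  exact hsum.unique (hasSum_ite_eq m _)

lemma eq_of_dtft_eq {a b : ℤ → ℝ} (ha : Summable fun k => |a k|)
    (hb : Summable fun k => |b k|) (hab : dtft a = dtft b) : a = b := by
  funext m
  have h := integral_exp_mul_dtft ha m
  rw [hab, integral_exp_mul_dtft hb m] at h
  have h2π : (2 * π : ℂ) ≠ 0 := by exact_mod_cast two_pi_pos.ne'
  exact_mod_cast (mul_left_cancel₀ h2π h).symm

lemma conj_dtft_of_comp_sub_left_eq {c : ℤ → ℝ} {a : ℤ} {ε : ℝ}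
    (hc : ∀ k, c (a - k) = ε * c k) (ω : ℝ) :
    conj (dtft c ω) = ε * cexp ((a * ω : ℝ) * I) * dtft c ω := by
  have h := dtft_comp_sub_left c a ω
  simp_rw [hc, dtft_const_mul] at h
  rw [mul_right_comm, h, neg_mul, Complex.exp_neg]
  field_simp

lemma comp_sub_left_eq_of_conj_dtft {c : ℤ → ℝ} {a : ℤ} {ε : ℝ}
    (hc : Summable fun k => |c k|)
    (h : ∀ ω, conj (dtft c ω) = ε * cexp ((a * ω : ℝ) * I) * dtft c ω) (k : ℤ) :
    c (a - k) = ε * c k := by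
  have hrefl : Summable fun k => |c (a - k)| := (Equiv.subLeft a).summable_iff.mpr hc
  have hscaled : Summable fun k => |ε * c k| := by simpa only [abs_mul] using hc.mul_left |ε|
  refine congrFun (eq_of_dtft_eq hrefl hscaled (funext fun ω => ?_)) k
  rw [dtft_comp_sub_left, h, dtft_const_mul, neg_mul, Complex.exp_neg]
  field_simp

theorem stmt_9_general (d km : ℤ) (ε : ℝ) (h g : ℤ → ℝ)
    (hgs : Summable fun k : ℤ => |g k|)
    (θ : ℝ → ℝ)
    (hθ : ∀ ω : ℝ, ∃ n : ℤ,
      2 * θ ω = π - (2 * (d : ℝ) + 1) * ω + 2 * π * n)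
    (hGH : ∀ ω : ℝ,
      (∑' k : ℤ, (g k : ℂ) * Complex.exp (-(((k : ℝ) * ω : ℝ) : ℂ) * Complex.I))
        = Complex.exp (-(θ ω : ℂ) * Complex.I) *
          ∑' k : ℤ, (h k : ℂ) * Complex.exp (-(((k : ℝ) * ω : ℝ) : ℂ) * Complex.I))
    (hsym : ∀ k : ℤ, h (2 * km - k) = ε * h k) :
    ∀ k : ℤ, g (2 * km - 2 * d - 1 - k) = -ε * g k := by
  refine comp_sub_left_eq_of_conj_dtft hgs fun ω => ?_
  obtain ⟨n, hn⟩ := hθ ω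
  have hphase : cexp (θ ω * I) * cexp (((2 * km : ℤ) * ω : ℝ) * I) =
      -cexp (((2 * km - 2 * d - 1 : ℤ) * ω : ℝ) * I) * cexp (-(θ ω : ℂ) * I) := by
    have hnc := congrArg ((↑) : ℝ → ℂ) hn
    push_cast at hnc
    have harg : (θ ω : ℂ) * I + ((2 * km : ℤ) * ω : ℝ) * I =
        ((2 * km - 2 * d - 1 : ℤ) * ω : ℝ) * I + -(θ ω : ℂ) * I + π * I + n * (2 * π * I) := by
      push_cast
      linear_combination I * hnc
    rw [← Complex.exp_add, harg, Complex.exp_add, Complex.exp_add, Complex.exp_add,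
      Complex.exp_pi_mul_I, exp_int_mul_two_pi_mul_I]
    ring
  rw [show dtft g ω = cexp (-(θ ω : ℂ) * I) * dtft h ω from hGH ω, map_mul,
    conj_dtft_of_comp_sub_left_eq hsym, ← Complex.exp_conj]
  simp only [map_mul, map_neg, conj_ofReal, conj_I, neg_mul_neg, ofReal_neg]
  linear_combination (ε * dtft h ω) * hphase

/-- Band-pass part of Proposition 4: a symmetric (resp. antisymmetric) filter
has an antisymmetric (resp. symmetric) Hilbert dual, centered at `k_m − d − 1/2`. -/
theorem stmt_9 (d km : ℤ) (ε : ℝ) (hε : ε = 1 ∨ ε = -1) (h g : ℤ → ℝ)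
    (hhs : Summable fun k : ℤ => |h k|) (hgs : Summable fun k : ℤ => |g k|)
    (θ : ℝ → ℝ)
    (hθ : ∀ ω : ℝ, ∃ n : ℤ,
      2 * θ ω = π - (2 * (d : ℝ) + 1) * ω + 2 * π * n)
    (hGH : ∀ ω : ℝ,
      (∑' k : ℤ, (g k : ℂ) * Complex.exp (-(((k : ℝ) * ω : ℝ) : ℂ) * Complex.I))
        = Complex.exp (-(θ ω : ℂ) * Complex.I) *
          ∑' k : ℤ, (h k : ℂ) * Complex.exp (-(((k : ℝ) * ω : ℝ) : ℂ) * Complex.I))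
    (hsym : ∀ k : ℤ, h (2 * km - k) = ε * h k) :
    ∀ k : ℤ, g (2 * km - 2 * d - 1 - k) = -ε * g k :=
  stmt_9_general d km ε h g hgs θ hθ hGH hsym
end
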